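/- arXiv:2501.15657 — 2 statements merged into one kernel-verified Lean document; each statement's English description precedes it below -/
import Mathlib

section
/- (Brouwer fixed point theorem for the disk) Every continuous map f : D² → D² of the closed 2-disk to itself has a fixed point: there exists x ∈ D² with f(x) = x. -/
open Complex Set Finset

noncomputable section BrouwerAux
open scoped Classical

local notation "π" => Real.pi

/-- clamp to [0,1] -/
def clampI (t : ℝ) : ℝ := max 0 (min t 1)

lemma clampI_mem (t : ℝ) : clampI t ∈ Icc (0:ℝ) 1 := by
  constructor
  · exact le_max_left _ _
  · simp only [clampI, max_le_iff]
    exact ⟨zero_le_one, min_le_right t 1⟩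

lemma clampI_of_mem {t : ℝ} (ht : t ∈ Icc (0:ℝ) 1) : clampI t = t := by
  simp [clampI, min_eq_left ht.2, max_eq_right ht.1]

lemma continuous_clampI : Continuous clampI :=
  continuous_const.max (continuous_id.min continuous_const)

lemma re_pos_of_norm_sub_one_lt {z : ℂ} (h : ‖z - 1‖ < 1) : 0 < z.re := by
  have h1 : |(z - 1).re| ≤ ‖z - 1‖ := Complex.abs_re_le_norm _
  have h2 : (z - 1).re = z.re - 1 := by simp
  rw [h2] at h1
  have : ‖z - 1‖ < 1 := h
  cases abs_le.mp h1 with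
  | intro a b => linarith

lemma telescope_prod (v : ℕ → ℂ) (hv : ∀ j, v j ≠ 0) (n : ℕ) :
    ∏ j ∈ Finset.range n, v (j + 1) / v j = v n / v 0 := by
  induction n with
  | zero => simp [div_self (hv 0)]
  | succ n ih =>
      rw [Finset.prod_range_succ, ih]
      field_simp
      rw [mul_div_mul_left _ _ (hv n)]

/-- Existence of a continuous argument lift on `[0,1]`. -/
lemma exists_lift (γ : ℝ → ℂ) (hc : Continuous γ) (hn : ∀ t, γ t ≠ 0) :
    ∃ θ : ℝ → ℝ, Continuous θ ∧
      ∀ t ∈ Icc (0:ℝ) 1, γ t = (‖γ t‖ : ℂ) * Complex.exp (θ t * I) := by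
  have hnorm : ∀ t, ‖γ t‖ ≠ 0 := fun t => norm_ne_zero_iff.mpr (hn t)
  set u : ℝ → ℂ := fun t => γ t / (‖γ t‖ : ℂ) with hu
  have hun : ∀ t, ‖u t‖ = 1 := by
    intro t
    simp only [hu, norm_div, Complex.norm_real, norm_norm]
    rw [div_self (hnorm t)]
  have hu0 : ∀ t, u t ≠ 0 := by
    intro t h
    have := hun t
    rw [h] at this
    simp at this
  have hucont : Continuous u :=
    hc.div (Complex.continuous_ofReal.comp hc.norm)
      (fun t => Complex.ofReal_ne_zero.mpr (hnorm t))
  have huc : UniformContinuousOn u (Icc 0 1) :=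
    isCompact_Icc.uniformContinuousOn_of_continuous hucont.continuousOn
  obtain ⟨δ, hδ, hδ2⟩ := Metric.uniformContinuousOn_iff.mp huc 1 one_pos
  obtain ⟨n, hngt⟩ := exists_nat_gt (1 / δ)
  have hnpos : (0:ℝ) < n := lt_of_le_of_lt (by positivity) hngt
  have hinv : 1 / (n:ℝ) < δ := by
    rw [div_lt_iff₀ hnpos]
    rw [div_lt_iff₀ hδ] at hngt
    linarith [hngt]
  set m : ℕ → ℝ → ℝ := fun j t => min (clampI t) ((j : ℝ) / n) with hm
  have hm_mem : ∀ j t, m j t ∈ Icc (0:ℝ) 1 := by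
    intro j t
    refine ⟨le_min (clampI_mem t).1 (by positivity), min_le_of_left_le (clampI_mem t).2⟩
  have hmcont : ∀ j, Continuous (m j) := fun j => continuous_clampI.min continuous_const
  have hmdist : ∀ j t, dist (m (j+1) t) (m j t) < δ := by
    intro j t
    have hle : m j t ≤ m (j+1) t := by
      apply min_le_min le_rfl
      gcongr
      push_cast
      linarith
    have hub : m (j+1) t ≤ m j t + 1 / n := by
      have h1 : ((j:ℝ)+1) / n = (j:ℝ)/n + 1/n := by ring
      have h2 : m j t + 1/n = min (clampI t + 1/n) ((j:ℝ)/n + 1/n) := by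
        rw [hm]; dsimp only
        rw [← min_add_add_right]
      rw [h2, hm]
      dsimp only
      push_cast
      rw [h1]
      exact min_le_min (by linarith [hnpos, one_div_pos.mpr hnpos]) le_rfl
    rw [Real.dist_eq, _root_.abs_of_nonneg (by linarith : (0:ℝ) ≤ m (j+1) t - m j t)]
    linarith [hinv]
  set w : ℕ → ℝ → ℂ := fun j t => u (m (j+1) t) / u (m j t) with hw
  have hwnear : ∀ j t, ‖w j t - 1‖ < 1 := by
    intro j t
    rw [hw]
    dsimp only
    rw [div_sub_one (hu0 _), norm_div, hun (m j t), div_one]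
    have := hδ2 _ (hm_mem (j+1) t) _ (hm_mem j t) (hmdist j t)
    rwa [dist_eq_norm] at this
  have hw0 : ∀ j t, w j t ≠ 0 := fun j t => div_ne_zero (hu0 _) (hu0 _)
  have hwun : ∀ j t, ‖w j t‖ = 1 := by
    intro j t
    rw [hw]; dsimp only
    rw [norm_div, hun, hun, div_one]
  have hwcont : ∀ j, Continuous (w j) := by
    intro j
    exact (hucont.comp (hmcont (j+1))).div (hucont.comp (hmcont j)) (fun t => hu0 _)
  set θ : ℝ → ℝ := fun t => (u 0).arg + ∑ j ∈ Finset.range n, (w j t).arg with hθ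
  have hθcont : Continuous θ := by
    apply continuous_const.add
    apply continuous_finset_sum
    intro j _
    rw [continuous_iff_continuousAt]
    intro t
    exact (Complex.continuousAt_arg
      (Complex.mem_slitPlane_iff.mpr (Or.inl (re_pos_of_norm_sub_one_lt (hwnear j t))))).comp
      (hwcont j).continuousAt
  have harg : ∀ z : ℂ, z ≠ 0 → ‖z‖ = 1 → Complex.exp ((z.arg : ℂ) * I) = z := by
    intro z hz hz1
    have h := Complex.norm_mul_exp_arg_mul_I z
    rw [hz1] at h
    simpa using h
  refine ⟨θ, hθcont, ?_⟩
  intro t ht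
  have hexp : Complex.exp ((θ t : ℂ) * I) = u t := by
    have hsplit : (θ t : ℂ) * I
        = (((u 0).arg : ℂ)) * I + ∑ j ∈ Finset.range n, ((w j t).arg : ℂ) * I := by
      rw [hθ]
      push_cast
      rw [add_mul, Finset.sum_mul]
    rw [hsplit, Complex.exp_add, Complex.exp_sum]
    have h1 : Complex.exp (((u 0).arg : ℂ) * I) = u 0 := harg _ (hu0 0) (hun 0)
    have h2 : ∀ j ∈ Finset.range n, Complex.exp (((w j t).arg : ℂ) * I) = w j t :=
      fun j _ => harg _ (hw0 j t) (hwun j t)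
    rw [h1, Finset.prod_congr rfl h2]
    have htele : ∏ j ∈ Finset.range n, w j t = u (m n t) / u (m 0 t) :=
      telescope_prod (fun j => u (m j t)) (fun j => hu0 _) n
    have hm0 : m 0 t = 0 := by
      rw [hm]; dsimp only
      simp [min_eq_right (clampI_mem t).1]
    have hmn : m n t = t := by
      rw [hm]; dsimp only
      rw [div_self (ne_of_gt hnpos), clampI_of_mem ht]
      exact min_eq_left ht.2
    rw [htele, hm0, hmn]
    rw [mul_div_assoc']
    rw [mul_comm, mul_div_assoc, div_self (hu0 0), mul_one]
  rw [hexp, hu]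
  dsimp only
  rw [mul_div_cancel₀ _ (Complex.ofReal_ne_zero.mpr (hnorm t))]

/-- Winding "total angle" of a path. -/
noncomputable def windA (γ : ℝ → ℂ) : ℝ :=
  if h : Continuous γ ∧ ∀ t, γ t ≠ 0 then
    (exists_lift γ h.1 h.2).choose 1 - (exists_lift γ h.1 h.2).choose 0
  else 0

/-- A continuous function on [0,1] with values in 2πℤ has equal endpoints. -/
lemma const_of_int_valued (d : ℝ → ℝ) (hc : ContinuousOn d (Icc 0 1))
    (h : ∀ t ∈ Icc (0:ℝ) 1, ∃ k : ℤ, d t = 2 * π * k) : d 1 = d 0 := by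
  by_contra hne
  obtain ⟨k0, h0⟩ := h 0 ⟨le_refl 0, zero_le_one⟩
  obtain ⟨k1, h1⟩ := h 1 ⟨zero_le_one, le_refl 1⟩
  have hpi : 0 < π := Real.pi_pos
  have hkne : k0 ≠ k1 := by
    intro he; exact hne (by rw [h0, h1, he])
  have key : ∀ t ∈ Icc (0:ℝ) 1, ∀ a : ℤ, d t ≠ 2 * π * a + π := by
    intro t ht a hcontra
    obtain ⟨k, hk⟩ := h t ht
    rw [hk] at hcontra
    have h2 : π * (2 * (k : ℝ)) = π * (2 * (a : ℝ) + 1) := by ring_nf; ring_nf at hcontra; linarith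
    have h3 : (2 * (k : ℝ)) = 2 * (a : ℝ) + 1 := mul_left_cancel₀ (ne_of_gt hpi) h2
    have h4 : (2 * k : ℤ) = 2 * a + 1 := by exact_mod_cast h3
    omega
  rcases lt_or_gt_of_ne hkne with hk | hk
  · have hc' : 2 * π * k0 + π ∈ Icc (d 0) (d 1) := by
      have hcast : (k0 : ℝ) + 1 ≤ k1 := by exact_mod_cast hk
      constructor
      · rw [h0]; linarith
      · rw [h1]; nlinarith
    obtain ⟨t, ht, hdt⟩ := intermediate_value_Icc zero_le_one hc hc'
    exact key t ht k0 hdt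
  · have hc' : 2 * π * k1 + π ∈ Icc (d 1) (d 0) := by
      have hcast : (k1 : ℝ) + 1 ≤ k0 := by exact_mod_cast hk
      constructor
      · rw [h1]; linarith
      · rw [h0]; nlinarith
    obtain ⟨t, ht, hdt⟩ := intermediate_value_Icc' zero_le_one hc hc'
    exact key t ht k1 hdt

lemma angle_diff_int {a b : ℝ} (h : Complex.exp ((a:ℂ) * I) = Complex.exp ((b:ℂ) * I)) :
    ∃ k : ℤ, a - b = 2 * π * k := by
  obtain ⟨k, hk⟩ := Complex.exp_eq_exp_iff_exists_int.mp h
  refine ⟨k, ?_⟩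
  have h2 : ((a - b - 2 * π * k : ℝ) : ℂ) * I = 0 := by
    push_cast
    linear_combination hk
  have h3 : ((a - b - 2 * π * k : ℝ) : ℂ) = 0 := by
    rcases mul_eq_zero.mp h2 with h' | h'
    · exact h'
    · exact absurd h' I_ne_zero
  have h4 : a - b - 2 * π * k = 0 := by exact_mod_cast h3
  linarith

lemma windA_eq (γ : ℝ → ℂ) (hc : Continuous γ) (hn : ∀ t, γ t ≠ 0)
    (θ : ℝ → ℝ) (hθc : Continuous θ)
    (hθ : ∀ t ∈ Icc (0:ℝ) 1, γ t = (‖γ t‖ : ℂ) * Complex.exp (θ t * I)) :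
    windA γ = θ 1 - θ 0 := by
  have hpair : Continuous γ ∧ ∀ t, γ t ≠ 0 := ⟨hc, hn⟩
  rw [windA, dif_pos hpair]
  obtain ⟨hθ'c, hθ'e⟩ := (exists_lift γ hpair.1 hpair.2).choose_spec
  set θ' := (exists_lift γ hpair.1 hpair.2).choose with hθ'def
  have key : ∀ t ∈ Icc (0:ℝ) 1, ∃ k : ℤ, θ' t - θ t = 2 * π * k := by
    intro t ht
    have e1 := hθ'e t ht
    have e2 := hθ t ht
    have hne : (‖γ t‖ : ℂ) ≠ 0 := Complex.ofReal_ne_zero.mpr (norm_ne_zero_iff.mpr (hn t))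
    apply angle_diff_int
    apply mul_left_cancel₀ hne
    rw [← e1, ← e2]
  obtain ⟨k0, hk0⟩ := key 0 ⟨le_refl 0, zero_le_one⟩
  obtain ⟨k1, hk1⟩ := key 1 ⟨zero_le_one, le_refl 1⟩
  have := const_of_int_valued (fun t => θ' t - θ t)
    ((hθ'c.sub hθc).continuousOn) key
  linarith

lemma windA_spec (γ : ℝ → ℂ) (hc : Continuous γ) (hn : ∀ t, γ t ≠ 0) :
    ∃ θ : ℝ → ℝ, Continuous θ ∧
      (∀ t ∈ Icc (0:ℝ) 1, γ t = (‖γ t‖ : ℂ) * Complex.exp (θ t * I)) ∧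
      windA γ = θ 1 - θ 0 := by
  obtain ⟨θ, h1, h2⟩ := exists_lift γ hc hn
  exact ⟨θ, h1, h2, windA_eq γ hc hn θ h1 h2⟩

lemma windA_int (γ : ℝ → ℂ) (hc : Continuous γ) (hn : ∀ t, γ t ≠ 0)
    (hloop : γ 0 = γ 1) : ∃ k : ℤ, windA γ = 2 * π * k := by
  obtain ⟨θ, hθc, hθe, hw⟩ := windA_spec γ hc hn
  have e0 := hθe 0 ⟨le_refl 0, zero_le_one⟩
  have e1 := hθe 1 ⟨zero_le_one, le_refl 1⟩
  rw [hloop] at e0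
  have hne : (‖γ 1‖ : ℂ) ≠ 0 := Complex.ofReal_ne_zero.mpr (norm_ne_zero_iff.mpr (hn 1))
  have : Complex.exp ((θ 1 : ℂ) * I) = Complex.exp ((θ 0 : ℂ) * I) :=
    mul_left_cancel₀ hne (by rw [← e0, ← e1])
  obtain ⟨k, hk⟩ := angle_diff_int this
  exact ⟨k, by rw [hw, hk]⟩

lemma windA_mul (γ₁ γ₂ : ℝ → ℂ) (hc₁ : Continuous γ₁) (hn₁ : ∀ t, γ₁ t ≠ 0)
    (hc₂ : Continuous γ₂) (hn₂ : ∀ t, γ₂ t ≠ 0) :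
    windA (fun t => γ₁ t * γ₂ t) = windA γ₁ + windA γ₂ := by
  obtain ⟨θ₁, hc1, he1, hw1⟩ := windA_spec γ₁ hc₁ hn₁
  obtain ⟨θ₂, hc2, he2, hw2⟩ := windA_spec γ₂ hc₂ hn₂
  have hmul := windA_eq (fun t => γ₁ t * γ₂ t) (hc₁.mul hc₂)
    (fun t => mul_ne_zero (hn₁ t) (hn₂ t)) (fun t => θ₁ t + θ₂ t) (hc1.add hc2) ?_
  · rw [hmul, hw1, hw2]; ring
  · intro t ht
    have := he1 t ht
    have := he2 t ht
    rw [norm_mul]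
    push_cast
    rw [add_mul, Complex.exp_add]
    calc γ₁ t * γ₂ t
        = ((‖γ₁ t‖ : ℂ) * Complex.exp ((θ₁ t:ℂ) * I)) *
          ((‖γ₂ t‖ : ℂ) * Complex.exp ((θ₂ t:ℂ) * I)) := by rw [← he1 t ht, ← he2 t ht]
      _ = (‖γ₁ t‖:ℂ) * (‖γ₂ t‖:ℂ) * (Complex.exp ((θ₁ t:ℂ) * I) * Complex.exp ((θ₂ t:ℂ) * I)) := by
          ring

lemma windA_zero_of_near_one (γ : ℝ → ℂ) (hc : Continuous γ) (hn : ∀ t, γ t ≠ 0)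
    (hnear : ∀ t ∈ Icc (0:ℝ) 1, ‖γ t - 1‖ < 1) (hloop : γ 0 = γ 1) :
    windA γ = 0 := by
  have hA : ∀ z : ℂ, z ≠ 0 → z = (‖z‖ : ℂ) * Complex.exp ((z.arg : ℂ) * I) := by
    intro z hz
    rw [Complex.norm_mul_exp_arg_mul_I]
  have hw := windA_eq γ hc hn (fun t => (γ (clampI t)).arg) ?_ ?_
  · rw [hw]
    have h0 : clampI 0 = 0 := clampI_of_mem ⟨le_refl 0, zero_le_one⟩
    have h1 : clampI 1 = 1 := clampI_of_mem ⟨zero_le_one, le_refl 1⟩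
    simp only [h0, h1, hloop, sub_self]
  · rw [continuous_iff_continuousAt]
    intro t
    have hre : 0 < (γ (clampI t)).re :=
      re_pos_of_norm_sub_one_lt (hnear _ (clampI_mem t))
    have h1 : ContinuousAt (fun t => γ (clampI t)) t := (hc.comp continuous_clampI).continuousAt
    exact ContinuousAt.comp (f := fun t => γ (clampI t)) (x := t)
      (Complex.continuousAt_arg (Complex.mem_slitPlane_iff.mpr (Or.inl hre))) h1
  · intro t ht
    simp only [clampI_of_mem ht]
    exact hA _ (hn t)

lemma windA_near (γ₁ γ₂ : ℝ → ℂ) (hc₁ : Continuous γ₁) (hn₁ : ∀ t, γ₁ t ≠ 0)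
    (hc₂ : Continuous γ₂) (hn₂ : ∀ t, γ₂ t ≠ 0)
    (hl₁ : γ₁ 0 = γ₁ 1) (hl₂ : γ₂ 0 = γ₂ 1)
    (hnear : ∀ t ∈ Icc (0:ℝ) 1, ‖γ₁ t - γ₂ t‖ < ‖γ₂ t‖) :
    windA γ₁ = windA γ₂ := by
  set δ : ℝ → ℂ := fun t => γ₁ t / γ₂ t with hδ
  have hδc : Continuous δ := hc₁.div hc₂ hn₂
  have hδn : ∀ t, δ t ≠ 0 := fun t => div_ne_zero (hn₁ t) (hn₂ t)
  have hδ0 : windA δ = 0 := by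
    apply windA_zero_of_near_one δ hδc hδn ?_ (by rw [hδ]; dsimp only; rw [hl₁, hl₂])
    intro t ht
    rw [hδ]
    dsimp only
    rw [div_sub_one (hn₂ t), norm_div]
    exact (div_lt_one (norm_pos_iff.mpr (hn₂ t))).mpr (hnear t ht)
  have heq : γ₁ = fun t => γ₂ t * δ t := by
    funext t
    rw [hδ]
    dsimp only
    rw [mul_div_cancel₀ _ (hn₂ t)]
  calc windA γ₁ = windA (fun t => γ₂ t * δ t) := by rw [← heq]
    _ = windA γ₂ + windA δ := windA_mul γ₂ δ hc₂ hn₂ hδc hδn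
    _ = windA γ₂ := by rw [hδ0, add_zero]

lemma windA_homotopy (H : ℝ → ℝ → ℂ)
    (hH : Continuous fun p : ℝ × ℝ => H p.1 p.2)
    (hn : ∀ s t, H s t ≠ 0) (hloop : ∀ s, H s 0 = H s 1) :
    windA (H 1) = windA (H 0) := by
  have hslice : ∀ s, Continuous (H s) :=
    fun s => hH.comp (continuous_const.prodMk continuous_id)
  have key : ∀ s₀ ∈ Icc (0:ℝ) 1, ∃ ε > 0, ∀ s ∈ Icc (0:ℝ) 1, |s - s₀| < ε →
      windA (H s) = windA (H s₀) := by
    intro s₀ hs₀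
    obtain ⟨t₀, ht₀, hmin⟩ := isCompact_Icc.exists_isMinOn
      (⟨0, left_mem_Icc.mpr zero_le_one⟩ : (Icc (0:ℝ) 1).Nonempty)
      ((hslice s₀).norm.continuousOn)
    have hm : 0 < ‖H s₀ t₀‖ := norm_pos_iff.mpr (hn s₀ t₀)
    have hK : IsCompact (Icc (0:ℝ) 1 ×ˢ Icc (0:ℝ) 1) := isCompact_Icc.prod isCompact_Icc
    have huc := hK.uniformContinuousOn_of_continuous hH.continuousOn
    obtain ⟨ε, hε, hε2⟩ := Metric.uniformContinuousOn_iff.mp huc _ hm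
    refine ⟨ε, hε, ?_⟩
    intro s hs hclose
    apply windA_near (H s) (H s₀) (hslice s) (hn s) (hslice s₀) (hn s₀)
      (hloop s) (hloop s₀)
    intro t ht
    have hd : dist ((s, t) : ℝ × ℝ) (s₀, t) < ε := by
      rw [Prod.dist_eq, Real.dist_eq, dist_self]
      exact max_lt hclose hε
    have := hε2 (s, t) ⟨hs, ht⟩ (s₀, t) ⟨hs₀, ht⟩ hd
    rw [dist_eq_norm] at this
    exact lt_of_lt_of_le this (hmin ht)
  have hWc : ContinuousOn (fun s => windA (H s)) (Icc 0 1) := by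
    intro s₀ hs₀
    obtain ⟨ε, hε, hloc⟩ := key s₀ hs₀
    apply ContinuousWithinAt.congr_of_eventuallyEq
      (continuousWithinAt_const (b := windA (H s₀)))
    · apply eventually_nhdsWithin_iff.mpr
      apply Metric.eventually_nhds_iff.mpr
      exact ⟨ε, hε, fun {y} hy hyI => hloc y hyI (by rwa [Real.dist_eq] at hy)⟩
    · rfl
  have hvals : ∀ s ∈ Icc (0:ℝ) 1, ∃ k : ℤ, windA (H s) = 2 * π * k :=
    fun s _ => windA_int (H s) (hslice s) (hn s) (hloop s)
  exact const_of_int_valued _ hWc hvals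

lemma windA_const (c : ℂ) (hc : c ≠ 0) : windA (fun _ => c) = 0 := by
  have hw := windA_eq (fun _ => c) continuous_const (fun _ => hc)
    (fun _ => c.arg) continuous_const ?_
  · rw [hw, sub_self]
  · intro t ht
    rw [Complex.norm_mul_exp_arg_mul_I]

end BrouwerAux

/-- The closed unit 2-disk `D² ⊆ ℝ²`. -/
def disk2 : Set (EuclideanSpace ℝ (Fin 2)) := Metric.closedBall 0 1

/-- **Brouwer fixed point theorem for the disk.** Every continuous map `f : D² → D²` of the
closed 2-disk to itself has a fixed point. -/
theorem brouwer_fixed_point_disk (f : disk2 → disk2) (hf : Continuous f) :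
    ∃ x : disk2, f x = x := by
  by_contra hfix
  push_neg at hfix
  set ι := Complex.orthonormalBasisOneI.repr with hι
  -- retraction of ℂ onto the closed unit ball
  set r : ℂ → ℂ := fun z => z / ((max 1 ‖z‖ : ℝ) : ℂ) with hr
  have hmaxpos : ∀ z : ℂ, (0:ℝ) < max 1 ‖z‖ := fun z => lt_of_lt_of_le one_pos (le_max_left _ _)
  have hrc : Continuous r := by
    apply continuous_id.div
    · exact Complex.continuous_ofReal.comp (continuous_const.max continuous_norm)
    · intro z
      simp only [ne_eq, Complex.ofReal_eq_zero]
      exact ne_of_gt (hmaxpos z)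
  have hrnorm : ∀ z, ‖r z‖ ≤ 1 := by
    intro z
    rw [hr]
    dsimp only
    rw [norm_div, Complex.norm_real, Real.norm_eq_abs, abs_of_pos (hmaxpos z),
      div_le_one (hmaxpos z)]
    exact le_max_right _ _
  have hreq : ∀ z : ℂ, ‖z‖ ≤ 1 → r z = z := by
    intro z hz
    rw [hr]
    dsimp only
    rw [max_eq_left hz]
    simp
  have hmem : ∀ z : ℂ, ι (r z) ∈ disk2 := by
    intro z
    simp only [disk2, Metric.mem_closedBall, dist_zero_right, ι.norm_map]
    exact hrnorm z
  set F : ℂ → ℂ :=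
    fun z => ι.symm ((f ⟨ι (r z), hmem z⟩ : disk2) : EuclideanSpace ℝ (Fin 2)) with hF
  have hFc : Continuous F := by
    apply ι.symm.continuous.comp
    apply continuous_subtype_val.comp
    exact hf.comp (Continuous.subtype_mk (ι.continuous.comp hrc) _)
  have hF1 : ∀ z, ‖F z‖ ≤ 1 := by
    intro z
    rw [hF]
    dsimp only
    rw [ι.symm.norm_map]
    have h2 := (f ⟨ι (r z), hmem z⟩).2
    simp only [disk2, Metric.mem_closedBall, dist_zero_right] at h2
    exact h2
  have hFne : ∀ z, ‖z‖ ≤ 1 → F z ≠ z := by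
    intro z hz heq
    apply hfix ⟨ι (r z), hmem z⟩
    apply Subtype.ext
    have h1 : ((f ⟨ι (r z), hmem z⟩ : disk2) : EuclideanSpace ℝ (Fin 2)) = ι z := by
      rw [hF] at heq
      dsimp only at heq
      calc ((f ⟨ι (r z), hmem z⟩ : disk2) : EuclideanSpace ℝ (Fin 2))
          = ι (ι.symm ((f ⟨ι (r z), hmem z⟩ : disk2) : EuclideanSpace ℝ (Fin 2))) :=
            (ι.apply_symm_apply _).symm
        _ = ι z := by rw [heq]
    rw [h1]
    show ι z = ι (r z)
    rw [hreq z hz]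
  have hF0 : F 0 ≠ 0 := hFne 0 (by simp)
  -- the standard circle loop
  set e : ℝ → ℂ := fun t => Complex.exp (((2 * Real.pi * t : ℝ) : ℂ) * I) with he
  have hec : Continuous e := by
    apply Complex.continuous_exp.comp
    exact (Complex.continuous_ofReal.comp (continuous_const.mul continuous_id)).mul
      continuous_const
  have hen : ∀ t, ‖e t‖ = 1 := by
    intro t
    rw [he]
    dsimp only
    rw [Complex.norm_exp_ofReal_mul_I]
  have hene : ∀ t, e t ≠ 0 := by
    intro t h
    have := hen t
    rw [h] at this
    simp at this
  have heloop : e 0 = e 1 := by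
    rw [he]
    dsimp only
    have h0 : ((2 * Real.pi * 0 : ℝ) : ℂ) * I = 0 := by push_cast; ring
    have h1 : ((2 * Real.pi * 1 : ℝ) : ℂ) * I = 2 * (Real.pi : ℂ) * I := by push_cast; ring
    rw [h0, h1, Complex.exp_zero, Complex.exp_two_pi_mul_I]
  have hnormse : ∀ s t : ℝ, ‖(clampI s : ℂ) * e t‖ ≤ 1 := by
    intro s t
    rw [norm_mul, hen t, mul_one, Complex.norm_real, Real.norm_eq_abs,
      _root_.abs_of_nonneg (clampI_mem s).1]
    exact (clampI_mem s).2
  -- first homotopy : from constant loop to the boundary loop of x - F x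
  set H₁ : ℝ → ℝ → ℂ :=
    fun s t => (clampI s : ℂ) * e t - F ((clampI s : ℂ) * e t) with hH₁
  have hH₁g : Continuous fun p : ℝ × ℝ => (clampI p.1 : ℂ) * e p.2 :=
    (Complex.continuous_ofReal.comp (continuous_clampI.comp continuous_fst)).mul
      (hec.comp continuous_snd)
  have hH₁c : Continuous fun p : ℝ × ℝ => H₁ p.1 p.2 := hH₁g.sub (hFc.comp hH₁g)
  have hH₁n : ∀ s t, H₁ s t ≠ 0 := by
    intro s t
    rw [hH₁]
    dsimp only
    rw [sub_ne_zero]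
    exact fun h => hFne _ (hnormse s t) h.symm
  have hH₁loop : ∀ s, H₁ s 0 = H₁ s 1 := by
    intro s
    rw [hH₁]
    dsimp only
    rw [heloop]
  -- second homotopy : from the circle loop to the boundary loop
  set H₂ : ℝ → ℝ → ℂ := fun s t => e t - (clampI s : ℂ) * F (e t) with hH₂
  have hH₂c : Continuous fun p : ℝ × ℝ => H₂ p.1 p.2 := by
    apply (hec.comp continuous_snd).sub
    exact (Complex.continuous_ofReal.comp (continuous_clampI.comp continuous_fst)).mul
      ((hFc.comp hec).comp continuous_snd)
  have hH₂n : ∀ s t, H₂ s t ≠ 0 := by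
    intro s t
    rw [hH₂]
    dsimp only
    rw [sub_ne_zero]
    intro h
    have hnorm1 : ‖(clampI s : ℂ) * F (e t)‖ = 1 := by rw [← h]; exact hen t
    have hcnorm : ‖(clampI s : ℂ)‖ = clampI s := by
      rw [Complex.norm_real, Real.norm_eq_abs, _root_.abs_of_nonneg (clampI_mem s).1]
    have hFle : ‖F (e t)‖ ≤ 1 := hF1 _
    have hs1 : clampI s * ‖F (e t)‖ = 1 := by rw [← hcnorm, ← norm_mul, hnorm1]
    have hsle : clampI s ≤ 1 := (clampI_mem s).2
    have hs0 : 0 ≤ clampI s := (clampI_mem s).1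
    have hcs : clampI s = 1 := by nlinarith
    rw [hcs] at h
    rw [Complex.ofReal_one, one_mul] at h
    exact hFne (e t) (le_of_eq (hen t)) h.symm
  have hH₂loop : ∀ s, H₂ s 0 = H₂ s 1 := by
    intro s
    rw [hH₂]
    dsimp only
    rw [heloop]
  -- winding number computations
  have hclamp0 : clampI 0 = 0 := clampI_of_mem ⟨le_refl 0, zero_le_one⟩
  have hclamp1 : clampI 1 = 1 := clampI_of_mem ⟨zero_le_one, le_refl 1⟩
  have hw10 : windA (H₁ 0) = 0 := by
    have hconst : H₁ 0 = fun _ => -F 0 := by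
      funext t
      rw [hH₁]
      dsimp only
      rw [hclamp0]
      simp
    rw [hconst]
    exact windA_const _ (neg_ne_zero.mpr hF0)
  have hw20 : windA (H₂ 0) = 2 * Real.pi := by
    have hconst : H₂ 0 = e := by
      funext t
      rw [hH₂]
      dsimp only
      rw [hclamp0]
      simp
    rw [hconst]
    have hw := windA_eq e hec hene (fun t => 2 * Real.pi * t)
      (continuous_const.mul continuous_id) ?_
    · rw [hw]; ring
    · intro t ht
      rw [hen t, Complex.ofReal_one, one_mul, he]
  have hskew : H₂ 1 = H₁ 1 := by
    funext t
    rw [hH₁, hH₂]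
    dsimp only
    rw [hclamp1, Complex.ofReal_one]
    simp
  have h1 := windA_homotopy H₁ hH₁c hH₁n hH₁loop
  have h2 := windA_homotopy H₂ hH₂c hH₂n hH₂loop
  rw [hskew, h1, hw10] at h2
  rw [hw20] at h2
  have := Real.pi_pos
  linarith
end

section
/- Two continuous paths lying in a square, one connecting the left side to the right side and the other connecting the bottom side to the top side, must intersect: if α, β : [0,1] → [0,1]² are continuous with α(0) on the left edge, α(1) on the right edge, β(0) on the bottom edge and β(1) on the top edge, then there exist s, t ∈ [0,1] with α(s) = β(t). -/
open unitInterval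

namespace PathsSquareAux


/-- The "door" indicator: `1` iff the unordered pair of colors is `{0, 1}`. -/
def door (x y : Fin 3) : ZMod 2 := if (x = 0 ∧ y = 1) ∨ (x = 1 ∧ y = 0) then 1 else 0

lemma door_triangle_or : ∀ x y z : Fin 3,
    ((x = 0 ∨ y = 0 ∨ z = 0) ∧ (x = 1 ∨ y = 1 ∨ z = 1) ∧ (x = 2 ∨ y = 2 ∨ z = 2)) ∨
      door x y + door y z + door x z = 0 := by decide

lemma door_step : ∀ x y z : Fin 3, x ≠ 2 → y ≠ 2 → z ≠ 2 →
    (if x = y then (0 : ZMod 2) else 1) + door y z = if x = z then 0 else 1 := by decide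

lemma door_ne_zero : ∀ x y : Fin 3, x ≠ 0 → y ≠ 0 → door x y = 0 := by decide

lemma door_ne_one : ∀ x y : Fin 3, x ≠ 1 → y ≠ 1 → door x y = 0 := by decide

lemma sum_shift (f : ℕ → ZMod 2) (m : ℕ) :
    ∑ j ∈ Finset.range m, f (j + 1) = (∑ j ∈ Finset.range m, f j) + f m + f 0 := by
  have e : (∑ j ∈ Finset.range m, f (j + 1)) + f 0 = (∑ j ∈ Finset.range m, f j) + f m := by
    rw [← Finset.sum_range_succ' f m, Finset.sum_range_succ]
  have key : ∀ a b x : ZMod 2, a + x = b → a = b + x := by decide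
  exact key _ _ _ e

lemma pair_sum (f : ℕ → ZMod 2) (m : ℕ) :
    ∑ j ∈ Finset.range m, (f j + f (j + 1)) = f m + f 0 := by
  rw [Finset.sum_add_distrib, sum_shift]
  exact (by decide : ∀ s a b : ZMod 2, s + (s + a + b) = a + b) _ _ _

lemma row_parity (f : ℕ → Fin 3) : ∀ m : ℕ, (∀ i ≤ m, f i ≠ 2) →
    ∑ i ∈ Finset.range m, door (f i) (f (i + 1)) = if f 0 = f m then 0 else 1 := by
  intro m
  induction m with
  | zero => intro _; simp
  | succ m ih =>
    intro h
    rw [Finset.sum_range_succ, ih (fun i hi => h i (Nat.le_succ_of_le hi)),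
      door_step (f 0) (f m) (f (m + 1)) (h 0 (by omega)) (h m (by omega)) (h (m + 1) le_rfl)]

lemma color_cases (F G : Prop) [Decidable F] [Decidable G] (k : Fin 3)
    (h : (if F then (1 : Fin 3) else if G then 2 else 0) = k) :
    (k = 1 ∧ F) ∨ (k = 2 ∧ ¬F ∧ G) ∨ (k = 0 ∧ ¬F ∧ ¬G) := by
  split_ifs at h with h1 h2
  · exact Or.inl ⟨h.symm, h1⟩
  · exact Or.inr (Or.inl ⟨h.symm, h1, h2⟩)
  · exact Or.inr (Or.inr ⟨h.symm, h1, h2⟩)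

/-- Membership in the cell with lower-left corner `(i, j)`. -/
def inCell (i j : ℕ) (v : ℕ × ℕ) : Prop := (v.1 = i ∨ v.1 = i + 1) ∧ (v.2 = j ∨ v.2 = j + 1)

/-- Combinatorial core (a Sperner-type lemma on the triangulated grid `[0,n]²`):
a 3-coloring which is never `1` on the left column, constantly `1` on the right column,
never `0` on the bottom row and never `2` on the top row has a cell realizing all
three colors. -/
lemma grid_lemma (n : ℕ) (c : ℕ → ℕ → Fin 3)
    (hL : ∀ j ≤ n, c 0 j ≠ 1) (hR : ∀ j ≤ n, c n j = 1)
    (hB : ∀ i ≤ n, c i 0 ≠ 0) (hT : ∀ i ≤ n, c i n ≠ 2) :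
    ∃ i, i < n ∧ ∃ j, j < n ∧ ∀ k : Fin 3, ∃ v, inCell i j v ∧ c v.1 v.2 = k := by
  by_contra hcon
  have noRb : ∀ i, i < n → ∀ j, j < n →
      ¬ (∀ k : Fin 3, ∃ v, inCell i j v ∧ c v.1 v.2 = k) :=
    fun i hi j hj h => hcon ⟨i, hi, j, hj, h⟩
  set S : ZMod 2 := ∑ i ∈ Finset.range n, ∑ j ∈ Finset.range n,
      ((door (c i j) (c (i+1) j) + door (c (i+1) j) (c (i+1) (j+1))
          + door (c i j) (c (i+1) (j+1))) +
        (door (c i j) (c i (j+1)) + door (c i (j+1)) (c (i+1) (j+1))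
          + door (c i j) (c (i+1) (j+1)))) with hS
  have S0 : S = 0 := by
    rw [hS]
    refine Finset.sum_eq_zero fun i hi => Finset.sum_eq_zero fun j hj => ?_
    rw [Finset.mem_range] at hi hj
    have tri : ∀ a₁ b₁ a₂ b₂ a₃ b₃ : ℕ,
        (a₁ = i ∨ a₁ = i + 1) → (b₁ = j ∨ b₁ = j + 1) →
        (a₂ = i ∨ a₂ = i + 1) → (b₂ = j ∨ b₂ = j + 1) →
        (a₃ = i ∨ a₃ = i + 1) → (b₃ = j ∨ b₃ = j + 1) →
        door (c a₁ b₁) (c a₂ b₂) + door (c a₂ b₂) (c a₃ b₃) + door (c a₁ b₁) (c a₃ b₃) = 0 := by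
      intro a₁ b₁ a₂ b₂ a₃ b₃ h₁ h₂ h₃ h₄ h₅ h₆
      rcases door_triangle_or (c a₁ b₁) (c a₂ b₂) (c a₃ b₃) with ⟨h0, h1, h2⟩ | h
      · exfalso
        apply noRb i hi j hj
        intro k
        fin_cases k
        · rcases h0 with e | e | e
          exacts [⟨(a₁, b₁), ⟨h₁, h₂⟩, e⟩, ⟨(a₂, b₂), ⟨h₃, h₄⟩, e⟩, ⟨(a₃, b₃), ⟨h₅, h₆⟩, e⟩]
        · rcases h1 with e | e | e
          exacts [⟨(a₁, b₁), ⟨h₁, h₂⟩, e⟩, ⟨(a₂, b₂), ⟨h₃, h₄⟩, e⟩, ⟨(a₃, b₃), ⟨h₅, h₆⟩, e⟩]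
        · rcases h2 with e | e | e
          exacts [⟨(a₁, b₁), ⟨h₁, h₂⟩, e⟩, ⟨(a₂, b₂), ⟨h₃, h₄⟩, e⟩, ⟨(a₃, b₃), ⟨h₅, h₆⟩, e⟩]
      · exact h
    rw [tri i j (i+1) j (i+1) (j+1) (Or.inl rfl) (Or.inl rfl) (Or.inr rfl) (Or.inl rfl)
        (Or.inr rfl) (Or.inr rfl),
      tri i j i (j+1) (i+1) (j+1) (Or.inl rfl) (Or.inl rfl) (Or.inl rfl) (Or.inr rfl)
        (Or.inr rfl) (Or.inr rfl), add_zero]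
  have S1 : S = 1 := by
    have rearr : ∀ a b u v d : ZMod 2,
        (a + v + d) + (u + b + d) = (a + b) + (u + v) := by decide
    have e1 : S = (∑ i ∈ Finset.range n, ∑ j ∈ Finset.range n,
          (door (c i j) (c (i+1) j) + door (c i (j+1)) (c (i+1) (j+1))))
        + ∑ i ∈ Finset.range n, ∑ j ∈ Finset.range n,
          (door (c i j) (c i (j+1)) + door (c (i+1) j) (c (i+1) (j+1))) := by
      rw [hS, ← Finset.sum_add_distrib]
      refine Finset.sum_congr rfl fun i _ => ?_
      rw [← Finset.sum_add_distrib]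
      exact Finset.sum_congr rfl fun j _ => rearr _ _ _ _ _
    have eH : ∀ i, ∑ j ∈ Finset.range n,
        (door (c i j) (c (i+1) j) + door (c i (j+1)) (c (i+1) (j+1))) =
        door (c i n) (c (i+1) n) + door (c i 0) (c (i+1) 0) :=
      fun i => pair_sum (fun j => door (c i j) (c (i+1) j)) n
    have eV : ∀ j, ∑ i ∈ Finset.range n,
        (door (c i j) (c i (j+1)) + door (c (i+1) j) (c (i+1) (j+1))) =
        door (c n j) (c n (j+1)) + door (c 0 j) (c 0 (j+1)) :=
      fun j => pair_sum (fun i => door (c i j) (c i (j+1))) n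
    rw [e1, Finset.sum_comm (t := Finset.range n) (s := Finset.range n)
        (f := fun i j => door (c i j) (c i (j+1)) + door (c (i+1) j) (c (i+1) (j+1)))]
    have hHbot : ∀ i ∈ Finset.range n,
        door (c i n) (c (i+1) n) + door (c i 0) (c (i+1) 0) = door (c i n) (c (i+1) n) := by
      intro i hi
      rw [Finset.mem_range] at hi
      rw [door_ne_zero _ _ (hB i (by omega)) (hB (i+1) (by omega)), add_zero]
    have hVside : ∀ j ∈ Finset.range n,
        door (c n j) (c n (j+1)) + door (c 0 j) (c 0 (j+1)) = 0 := by
      intro j hj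
      rw [Finset.mem_range] at hj
      rw [door_ne_one _ _ (hL j (by omega)) (hL (j+1) (by omega)),
        hR j (by omega), hR (j+1) (by omega), add_zero]
      decide
    calc (∑ i ∈ Finset.range n, ∑ j ∈ Finset.range n,
          (door (c i j) (c (i+1) j) + door (c i (j+1)) (c (i+1) (j+1))))
        + ∑ j ∈ Finset.range n, ∑ i ∈ Finset.range n,
          (door (c i j) (c i (j+1)) + door (c (i+1) j) (c (i+1) (j+1)))
        = (∑ i ∈ Finset.range n, door (c i n) (c (i+1) n)) + 0 := by
          rw [Finset.sum_congr rfl fun i hi => (eH i).trans (hHbot i hi),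
            Finset.sum_congr rfl fun j hj => (eV j).trans (hVside j hj), Finset.sum_const,
            smul_zero]
      _ = 1 := by
          rw [add_zero, row_parity (fun i => c i n) n (fun i hi => hT i hi)]
          have hn : 0 < n := by
            rcases Nat.eq_zero_or_pos n with h0 | h0
            · subst h0; exact absurd (hR 0 le_rfl) (hL 0 le_rfl)
            · exact h0
          rw [if_neg]
          intro hEq
          exact hL n le_rfl (hEq.trans (hR n le_rfl))
  rw [S0] at S1
  exact absurd S1 (by decide)


noncomputable def clamp01 (x : ℝ) : ℝ := max 0 (min 1 x)

lemma clamp01_continuous : Continuous clamp01 :=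
  continuous_const.max (continuous_const.min continuous_id)

lemma clamp01_mem (x : ℝ) : clamp01 x ∈ Set.Icc (0:ℝ) 1 :=
  ⟨le_max_left _ _, max_le zero_le_one (min_le_left _ _)⟩

lemma clamp01_of_mem {x : ℝ} (hx : x ∈ Set.Icc (0:ℝ) 1) : clamp01 x = x := by
  rw [clamp01, min_eq_right hx.2, max_eq_right hx.1]

lemma clamp01_of_neg {x : ℝ} (hx : x < 0) : clamp01 x = 0 := by
  rw [clamp01, min_eq_right (by linarith : x ≤ 1), max_eq_left (by linarith)]

lemma clamp01_of_gt {x : ℝ} (hx : 1 < x) : clamp01 x = 1 := by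
  rw [clamp01, min_eq_left (by linarith : (1:ℝ) ≤ x)]
  exact max_eq_right zero_le_one

noncomputable def Ff (α β : ℝ → ℝ × ℝ) (p : ℝ × ℝ) : ℝ :=
  (α (clamp01 p.1)).1 - (β (clamp01 p.2)).1 + (p.1 - clamp01 p.1)

noncomputable def Gg (α β : ℝ → ℝ × ℝ) (p : ℝ × ℝ) : ℝ :=
  (α (clamp01 p.1)).2 - (β (clamp01 p.2)).2 - (p.2 - clamp01 p.2)

noncomputable def pt (n : ℕ) (v : ℕ × ℕ) : ℝ × ℝ :=
  (-1 + 3 * v.1 / n, -1 + 3 * v.2 / n)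

end PathsSquareAux

open unitInterval PathsSquareAux


/-- **Paths in a square connecting opposite sides intersect.** If `α, β : [0,1] → [0,1]²`
are continuous, `α` starts on the left edge `{0} × [0,1]` and ends on the right edge
`{1} × [0,1]`, while `β` starts on the bottom edge `[0,1] × {0}` and ends on the top edge
`[0,1] × {1}`, then the two paths intersect: `α s = β t` for some `s, t ∈ [0,1]`. -/
theorem paths_in_square_intersect (α β : ℝ → ℝ × ℝ)
    (hα : ContinuousOn α (Set.Icc 0 1)) (hβ : ContinuousOn β (Set.Icc 0 1))
    (hα_mem : ∀ s ∈ Set.Icc (0:ℝ) 1, α s ∈ Set.Icc (0:ℝ) 1 ×ˢ Set.Icc (0:ℝ) 1)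
    (hβ_mem : ∀ t ∈ Set.Icc (0:ℝ) 1, β t ∈ Set.Icc (0:ℝ) 1 ×ˢ Set.Icc (0:ℝ) 1)
    (hα0 : (α 0).1 = 0) (hα1 : (α 1).1 = 1)
    (hβ0 : (β 0).2 = 0) (hβ1 : (β 1).2 = 1) :
    ∃ s ∈ Set.Icc (0:ℝ) 1, ∃ t ∈ Set.Icc (0:ℝ) 1, α s = β t := by
  by_contra hcon
  push_neg at hcon
  -- bounds for the clamped paths
  have hαb : ∀ x : ℝ, α (clamp01 x) ∈ Set.Icc (0:ℝ) 1 ×ˢ Set.Icc (0:ℝ) 1 :=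
    fun x => hα_mem _ (clamp01_mem x)
  have hβb : ∀ x : ℝ, β (clamp01 x) ∈ Set.Icc (0:ℝ) 1 ×ˢ Set.Icc (0:ℝ) 1 :=
    fun x => hβ_mem _ (clamp01_mem x)
  -- continuity
  have hAcont : Continuous fun x => α (clamp01 x) :=
    hα.comp_continuous clamp01_continuous clamp01_mem
  have hBcont : Continuous fun x => β (clamp01 x) :=
    hβ.comp_continuous clamp01_continuous clamp01_mem
  have hFc : Continuous (Ff α β) := by
    unfold Ff
    exact (((hAcont.comp continuous_fst).fst.sub
      (hBcont.comp continuous_snd).fst).add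
      (continuous_fst.sub (clamp01_continuous.comp continuous_fst)))
  have hGc : Continuous (Gg α β) := by
    unfold Gg
    exact (((hAcont.comp continuous_fst).snd.sub
      (hBcont.comp continuous_snd).snd).sub
      (continuous_snd.sub (clamp01_continuous.comp continuous_snd)))
  -- sign lemmas for the extended functions
  have hFneg : ∀ p : ℝ × ℝ, p.1 < 0 → Ff α β p < 0 := by
    intro p hp
    have hb := ((Set.mem_prod.mp (hβb p.2)).1 : (β (clamp01 p.2)).1 ∈ Set.Icc (0:ℝ) 1)
    rw [Ff, clamp01_of_neg hp, hα0]
    linarith [hb.1]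
  have hFpos : ∀ p : ℝ × ℝ, 1 < p.1 → 0 < Ff α β p := by
    intro p hp
    have hb := ((Set.mem_prod.mp (hβb p.2)).1 : (β (clamp01 p.2)).1 ∈ Set.Icc (0:ℝ) 1)
    rw [Ff, clamp01_of_gt hp, hα1]
    linarith [hb.2]
  have hGpos : ∀ p : ℝ × ℝ, p.2 < 0 → 0 < Gg α β p := by
    intro p hp
    have ha := ((Set.mem_prod.mp (hαb p.1)).2 : (α (clamp01 p.1)).2 ∈ Set.Icc (0:ℝ) 1)
    rw [Gg, clamp01_of_neg hp, hβ0]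
    linarith [ha.1]
  have hGneg : ∀ p : ℝ × ℝ, 1 < p.2 → Gg α β p < 0 := by
    intro p hp
    have ha := ((Set.mem_prod.mp (hαb p.1)).2 : (α (clamp01 p.1)).2 ∈ Set.Icc (0:ℝ) 1)
    rw [Gg, clamp01_of_gt hp, hβ1]
    linarith [ha.2]
  -- no common zero
  have hNZ : ∀ p : ℝ × ℝ, ¬(Ff α β p = 0 ∧ Gg α β p = 0) := by
    rintro p ⟨hf, hg⟩
    rcases lt_or_ge p.1 0 with hs | hs
    · exact absurd hf (ne_of_lt (hFneg p hs))
    rcases lt_or_ge 1 p.1 with hs1 | hs1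
    · exact absurd hf (ne_of_gt (hFpos p hs1))
    rcases lt_or_ge p.2 0 with ht | ht
    · exact absurd hg (ne_of_gt (hGpos p ht))
    rcases lt_or_ge 1 p.2 with ht1 | ht1
    · exact absurd hg (ne_of_lt (hGneg p ht1))
    have hsmem : p.1 ∈ Set.Icc (0:ℝ) 1 := ⟨hs, hs1⟩
    have htmem : p.2 ∈ Set.Icc (0:ℝ) 1 := ⟨ht, ht1⟩
    rw [Ff, clamp01_of_mem hsmem, clamp01_of_mem htmem] at hf
    rw [Gg, clamp01_of_mem hsmem, clamp01_of_mem htmem] at hg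
    exact hcon p.1 hsmem p.2 htmem (Prod.ext (by linarith) (by linarith))
  -- the big compact square and the minimum of max(|F|,|G|)
  set Q : Set (ℝ × ℝ) := Set.Icc (-1:ℝ) 2 ×ˢ Set.Icc (-1:ℝ) 2 with hQ
  have hQc : IsCompact Q := isCompact_Icc.prod isCompact_Icc
  have hQne : Q.Nonempty := ⟨((-1:ℝ), (-1:ℝ)), by
    constructor <;> exact ⟨le_refl _, by norm_num⟩⟩
  have hφc : Continuous fun p => max |Ff α β p| |Gg α β p| := hFc.abs.max hGc.abs
  obtain ⟨p₀, hp₀Q, hp₀min'⟩ := hQc.exists_isMinOn hQne hφc.continuousOn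
  have hp₀min := isMinOn_iff.mp hp₀min'
  set ε : ℝ := max |Ff α β p₀| |Gg α β p₀| with hεdef
  have hε : 0 < ε := by
    rcases lt_or_ge 0 ε with h | h
    · exact h
    exact absurd ⟨abs_nonpos_iff.mp (le_trans (le_max_left _ _) h),
      abs_nonpos_iff.mp (le_trans (le_max_right _ _) h)⟩ (hNZ p₀)
  -- uniform continuity on Q
  obtain ⟨δ₁, hδ₁, hδ₁F⟩ := Metric.uniformContinuousOn_iff.mp
    (hQc.uniformContinuousOn_of_continuous hFc.continuousOn) ε hε
  obtain ⟨δ₂, hδ₂, hδ₂G⟩ := Metric.uniformContinuousOn_iff.mp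
    (hQc.uniformContinuousOn_of_continuous hGc.continuousOn) ε hε
  set δ : ℝ := min δ₁ δ₂ with hδdef
  have hδ : 0 < δ := lt_min hδ₁ hδ₂
  -- choose the grid size
  obtain ⟨n, hnδ⟩ := exists_nat_gt (3 / δ)
  have hnpos : (0:ℝ) < n := lt_trans (by positivity) hnδ
  have h3n : 3 / (n:ℝ) < δ := by
    rw [div_lt_iff₀ hnpos]
    have := (div_lt_iff₀ hδ).mp hnδ
    linarith
  -- grid points lie in Q
  have hcoord : ∀ i : ℕ, i ≤ n → (-1 + 3 * (i:ℝ) / n) ∈ Set.Icc (-1:ℝ) 2 := by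
    intro i hi
    have hi' : (i:ℝ) ≤ n := by exact_mod_cast hi
    constructor
    · have : 0 ≤ 3 * (i:ℝ) / n := by positivity
      linarith
    · have : 3 * (i:ℝ) / n ≤ 3 := by
        rw [div_le_iff₀ hnpos]; linarith
      linarith
  have hPQ : ∀ a b : ℕ, a ≤ n → b ≤ n → pt n (a, b) ∈ Q := by
    intro a b ha hb
    exact ⟨hcoord a ha, hcoord b hb⟩
  -- distances within a cell
  have hone : ∀ a b : ℕ, a ≤ b + 1 → b ≤ a + 1 → |3 * (a:ℝ) / n - 3 * b / n| ≤ 3 / n := by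
    intro a b hab hba
    have hab' : (a:ℝ) ≤ b + 1 := by exact_mod_cast hab
    have hba' : (b:ℝ) ≤ a + 1 := by exact_mod_cast hba
    have h1 : |(a:ℝ) - b| ≤ 1 := by rw [abs_le]; constructor <;> linarith
    have e : 3 * (a:ℝ) / n - 3 * b / n = 3 * ((a:ℝ) - b) / n := by ring
    rw [e, show (3:ℝ)/(n:ℝ) = 3 * 1 / n by ring]
    rw [abs_div, abs_of_nonneg (le_of_lt hnpos), abs_mul, abs_of_nonneg (by norm_num : (0:ℝ) ≤ 3)]
    gcongr
  have hPdist : ∀ a b a' b' : ℕ, a ≤ a' + 1 → a' ≤ a + 1 → b ≤ b' + 1 → b' ≤ b + 1 →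
      dist (pt n (a, b)) (pt n (a', b')) < δ := by
    intro a b a' b' h1 h2 h3 h4
    rw [Prod.dist_eq]
    apply lt_of_le_of_lt (max_le ?_ ?_) h3n
    · rw [Real.dist_eq, pt, pt]
      have := hone a a' h1 h2
      simpa using this
    · rw [Real.dist_eq, pt, pt]
      have := hone b b' h3 h4
      simpa using this
  -- the coloring of grid vertices
  set c : ℕ → ℕ → Fin 3 := fun i j =>
    if 0 < Ff α β (pt n (i, j)) then 1 else if 0 < Gg α β (pt n (i, j)) then 2 else 0 with hc
  have hcL : ∀ j ≤ n, c 0 j ≠ 1 := by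
    intro j hj
    have h0 : (pt n ((0:ℕ), j)).1 < 0 := by
      simp only [pt]; norm_num
    have hneg := hFneg _ h0
    simp only [hc]
    rw [if_neg (not_lt.mpr hneg.le)]
    split_ifs <;> decide
  have hcR : ∀ j ≤ n, c n j = 1 := by
    intro j hj
    have h0 : 1 < (pt n ((n:ℕ), j)).1 := by
      simp only [pt]
      rw [mul_div_assoc, div_self hnpos.ne']
      norm_num
    simp only [hc]
    rw [if_pos (hFpos _ h0)]
  have hcB : ∀ i ≤ n, c i 0 ≠ 0 := by
    intro i hi
    have h0 : (pt n (i, (0:ℕ))).2 < 0 := by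
      simp only [pt]; norm_num
    have hpos := hGpos _ h0
    simp only [hc]
    intro hzero
    rcases color_cases _ _ _ hzero with ⟨hk, _⟩ | ⟨hk, _⟩ | ⟨_, _, hG'⟩
    · exact absurd hk.symm (by decide)
    · exact absurd hk.symm (by decide)
    · exact hG' hpos
  have hcT : ∀ i ≤ n, c i n ≠ 2 := by
    intro i hi
    have h0 : 1 < (pt n (i, (n:ℕ))).2 := by
      simp only [pt]
      rw [mul_div_assoc, div_self hnpos.ne']
      norm_num
    have hneg := hGneg _ h0
    simp only [hc]
    intro htwo
    rcases color_cases _ _ _ htwo with ⟨hk, _⟩ | ⟨_, _, hG'⟩ | ⟨hk, _⟩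
    · exact absurd hk.symm (by decide)
    · exact absurd hG' (not_lt.mpr hneg.le)
    · exact absurd hk.symm (by decide)
  obtain ⟨i, hi, j, hj, hall⟩ := grid_lemma n c hcL hcR hcB hcT
  obtain ⟨v₁, hv₁, e₁⟩ := hall 1
  obtain ⟨v₂, hv₂, e₂⟩ := hall 2
  obtain ⟨v₃, hv₃, e₃⟩ := hall 0
  obtain ⟨ha₁, hb₁⟩ := hv₁
  obtain ⟨ha₂, hb₂⟩ := hv₂
  obtain ⟨ha₃, hb₃⟩ := hv₃
  have hF₁ : 0 < Ff α β (pt n (v₁.1, v₁.2)) := by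
    simp only [hc] at e₁
    rcases color_cases _ _ _ e₁ with ⟨_, h⟩ | ⟨hk, _⟩ | ⟨hk, _⟩
    · exact h
    · exact absurd hk (by decide)
    · exact absurd hk (by decide)
  have hG₂ : 0 < Gg α β (pt n (v₂.1, v₂.2)) := by
    simp only [hc] at e₂
    rcases color_cases _ _ _ e₂ with ⟨hk, _⟩ | ⟨_, _, h⟩ | ⟨hk, _⟩
    · exact absurd hk (by decide)
    · exact h
    · exact absurd hk (by decide)
  have hF₃ : ¬ 0 < Ff α β (pt n (v₃.1, v₃.2)) := by
    simp only [hc] at e₃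
    rcases color_cases _ _ _ e₃ with ⟨hk, _⟩ | ⟨hk, _⟩ | ⟨_, h, _⟩
    · exact absurd hk (by decide)
    · exact absurd hk (by decide)
    · exact h
  have hG₃ : ¬ 0 < Gg α β (pt n (v₃.1, v₃.2)) := by
    simp only [hc] at e₃
    rcases color_cases _ _ _ e₃ with ⟨hk, _⟩ | ⟨hk, _⟩ | ⟨_, _, h⟩
    · exact absurd hk (by decide)
    · exact absurd hk (by decide)
    · exact h
  have hA1 : v₁.1 ≤ n := by rcases ha₁ with h | h <;> omega
  have hB1 : v₁.2 ≤ n := by rcases hb₁ with h | h <;> omega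
  have hA2 : v₂.1 ≤ n := by rcases ha₂ with h | h <;> omega
  have hB2 : v₂.2 ≤ n := by rcases hb₂ with h | h <;> omega
  have hA3 : v₃.1 ≤ n := by rcases ha₃ with h | h <;> omega
  have hB3 : v₃.2 ≤ n := by rcases hb₃ with h | h <;> omega
  have h13a : v₁.1 ≤ v₃.1 + 1 := by rcases ha₁ with h | h <;> rcases ha₃ with h' | h' <;> omega
  have h31a : v₃.1 ≤ v₁.1 + 1 := by rcases ha₁ with h | h <;> rcases ha₃ with h' | h' <;> omega
  have h13b : v₁.2 ≤ v₃.2 + 1 := by rcases hb₁ with h | h <;> rcases hb₃ with h' | h' <;> omega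
  have h31b : v₃.2 ≤ v₁.2 + 1 := by rcases hb₁ with h | h <;> rcases hb₃ with h' | h' <;> omega
  have h23a : v₂.1 ≤ v₃.1 + 1 := by rcases ha₂ with h | h <;> rcases ha₃ with h' | h' <;> omega
  have h32a : v₃.1 ≤ v₂.1 + 1 := by rcases ha₂ with h | h <;> rcases ha₃ with h' | h' <;> omega
  have h23b : v₂.2 ≤ v₃.2 + 1 := by rcases hb₂ with h | h <;> rcases hb₃ with h' | h' <;> omega
  have h32b : v₃.2 ≤ v₂.2 + 1 := by rcases hb₂ with h | h <;> rcases hb₃ with h' | h' <;> omega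
  have hεle := hp₀min (pt n (v₃.1, v₃.2)) (hPQ _ _ hA3 hB3)
  rcases le_max_iff.mp hεle with hcase | hcase
  · have hFP₃ : Ff α β (pt n (v₃.1, v₃.2)) ≤ -ε := by
      rw [abs_of_nonpos (not_lt.mp hF₃)] at hcase; linarith
    have hd := hδ₁F _ (hPQ _ _ hA1 hB1) _ (hPQ _ _ hA3 hB3)
      (lt_of_lt_of_le (hPdist _ _ _ _ h13a h31a h13b h31b) (min_le_left _ _))
    rw [Real.dist_eq] at hd
    have habs := abs_lt.mp hd
    linarith [hF₁]
  · have hGP₃ : Gg α β (pt n (v₃.1, v₃.2)) ≤ -ε := by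
      rw [abs_of_nonpos (not_lt.mp hG₃)] at hcase; linarith
    have hd := hδ₂G _ (hPQ _ _ hA2 hB2) _ (hPQ _ _ hA3 hB3)
      (lt_of_lt_of_le (hPdist _ _ _ _ h23a h32a h23b h32b) (min_le_right _ _))
    rw [Real.dist_eq] at hd
    have habs := abs_lt.mp hd
    linarith [hG₂]
end
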